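/- arXiv:1409.3819 — 3 statements merged into one kernel-verified Lean document; each statement's English description precedes it below -/
import Mathlib

section
/- Lemma 2 (Leibniz principle for Leibniz argument positions): let d be a defined n-ary operator whose i-th argument position is Leibniz (i ∈ 1..n). For any expressions e₁,…,eₙ, Kripke model M, state w, and rigid variable x not occurring free in any eⱼ, ⟦d(e₁,…,eₙ)⟧^M_w = ⟦d(e₁,…,e_{i−1},x,e_{i+1},…,eₙ)⟧^{M'}_w, where M' agrees with M except for the valuation of rigid variables, which is like ξ but assigns x to ⟦eᵢ⟧^M_w. -/
/-! Evaluating `subst σ e` at a state `w` consults each `σ y` only at `w`, unless `y` occurs in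
the scope of a `∇`, where `σ y` is evaluated at other states. Hence two substitutions (under two
valuations) whose images agree at `w` on the free variables of `e`, and at every state on the
variables under `∇`, give `e` the same value. For `d(e₁,…,eₙ)` against `d(…,x,…)` under
`ξ[x ↦ ⟦eᵢ⟧_w]`, position `i` agrees at `w` and, as `x` is free in no `eⱼ`, every other position
agrees at every state; the Leibniz condition says exactly that `xᵢ` is not under a `∇`. -/

open scoped Classical

/-- FOML expressions. -/
inductive Expr (X V O : Type) (ar : O → ℕ) : Type where
  | rig   : X → Expr X V O ar
  | flex  : V → Expr X V O ar
  | app   : (op : O) → (Fin (ar op) → Expr X V O ar) → Expr X V O ar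
  | eq    : Expr X V O ar → Expr X V O ar → Expr X V O ar
  | fls   : Expr X V O ar
  | imp   : Expr X V O ar → Expr X V O ar → Expr X V O ar
  | all   : X → Expr X V O ar → Expr X V O ar
  | nabla : Expr X V O ar → Expr X V O ar

/-- Kripke model for FOML (with the rigid valuation ξ given separately). -/
structure Model (X V O : Type) (ar : O → ℕ) where
  U : Type
  tt : U
  ff : U
  tt_ne_ff : tt ≠ ff
  I : (op : O) → (Fin (ar op) → U) → U
  W : Type
  W_nonempty : Nonempty W
  R : W → W → Prop
  ζ : V → W → U
  box : Set U → U
  box_eq_tt : ∀ S : Set U, box S = tt ↔ S ⊆ {tt}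

variable {X V O : Type} {ar : O → ℕ}

noncomputable def eval (M : Model X V O ar) : Expr X V O ar → (X → M.U) → M.W → M.U
  | .rig x, ξ, _ => ξ x
  | .flex v, _, w => M.ζ v w
  | .app op es, ξ, w => M.I op (fun i => eval M (es i) ξ w)
  | .eq a b, ξ, w => if eval M a ξ w = eval M b ξ w then M.tt else M.ff
  | .fls, _, _ => M.ff
  | .imp a b, ξ, w => if (eval M a ξ w = M.tt → eval M b ξ w = M.tt) then M.tt else M.ff
  | .all x e, ξ, w => if (∀ d : M.U, eval M e (Function.update ξ x d) w = M.tt) then M.tt else M.ff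
  | .nabla e, ξ, w => M.box {u : M.U | ∃ w', M.R w w' ∧ eval M e ξ w' = u}

def sat (M : Model X V O ar) (ξ : X → M.U) (e : Expr X V O ar) (w : M.W) : Prop :=
  eval M e ξ w = M.tt

def Valid (e : Expr X V O ar) : Prop :=
  ∀ (M : Model X V O ar) (ξ : X → M.U) (w : M.W), sat M ξ e w

def Consequence (Γ : Set (Expr X V O ar)) (φ : Expr X V O ar) : Prop :=
  ∀ (M : Model X V O ar) (ξ : X → M.U),
    (∀ ψ ∈ Γ, ∀ w : M.W, sat M ξ ψ w) → ∀ w : M.W, sat M ξ φ w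

def Rigid : Expr X V O ar → Prop
  | .rig _ => True
  | .flex _ => False
  | .app _ es => ∀ i, Rigid (es i)
  | .eq a b => Rigid a ∧ Rigid b
  | .fls => True
  | .imp a b => Rigid a ∧ Rigid b
  | .all _ e => Rigid e
  | .nabla _ => False

def freeRigid (y : X) : Expr X V O ar → Prop
  | .rig x => y = x
  | .flex _ => False
  | .app _ es => ∃ i, freeRigid y (es i)
  | .eq a b => freeRigid y a ∨ freeRigid y b
  | .fls => False
  | .imp a b => freeRigid y a ∨ freeRigid y b
  | .all x e => y ≠ x ∧ freeRigid y e
  | .nabla e => freeRigid y e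

/-! ### Capture-avoiding substitution and defined operators -/

/-- The list of free rigid variables of an expression. -/
noncomputable def freeList : Expr X V O ar → List X
  | .rig x => [x]
  | .flex _ => []
  | .app _ es => (List.ofFn fun i => freeList (es i)).flatten
  | .eq a b => freeList a ++ freeList b
  | .fls => []
  | .imp a b => freeList a ++ freeList b
  | .all x e => (freeList e).filter (fun y => decide (y ≠ x))
  | .nabla e => freeList e

/-- A rigid variable avoiding a given (finite) list; exists since 𝒳 is denumerable. -/
noncomputable def freshVar [Infinite X] (l : List X) : X :=
  Classical.choose (Infinite.exists_notMem_finset l.toFinset)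

/-- Capture-avoiding simultaneous substitution: `subst σ e` replaces every free
    rigid variable `y` of `e` by `σ y`, renaming bound variables to fresh ones so
    that no free variable of the substituted expressions is captured. -/
noncomputable def subst [Infinite X] (σ : X → Expr X V O ar) :
    Expr X V O ar → Expr X V O ar
  | .rig x => σ x
  | .flex v => .flex v
  | .app op es => .app op (fun i => subst σ (es i))
  | .eq a b => .eq (subst σ a) (subst σ b)
  | .fls => .fls
  | .imp a b => .imp (subst σ a) (subst σ b)
  | .all x e =>
      let x' := freshVar ((freeList e).flatMap (fun y => freeList (σ y)))
      .all x' (subst (Function.update σ x (.rig x')) e)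
  | .nabla e => .nabla (subst σ e)

/-- The substitution [e₁/x₁, …, eₙ/xₙ] as a total map on rigid variables
    (the parameters x₁, …, xₙ being pairwise distinct). -/
noncomputable def substMap {n : ℕ} (xs : Fin n → X) (es : Fin n → Expr X V O ar) :
    X → Expr X V O ar :=
  fun y => if h : ∃ i, xs i = y then es h.choose else .rig y

/-- The application d(e₁,…,eₙ) of the operator defined by d(x₁,…,xₙ) ≜ body,
    i.e. the expression body[e₁/x₁, …, eₙ/xₙ]. -/
noncomputable def dApp [Infinite X] {n : ℕ} (xs : Fin n → X)
    (body : Expr X V O ar) (es : Fin n → Expr X V O ar) : Expr X V O ar :=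
  subst (substMap xs es) body

/-- `occursUnderNabla y e` holds iff `y` has a free occurrence in `e` lying in the
    scope of some occurrence of ∇ (i.e. within a non-Leibniz argument position). -/
def occursUnderNabla (y : X) : Expr X V O ar → Prop
  | .rig _ => False
  | .flex _ => False
  | .app _ es => ∃ i, occursUnderNabla y (es i)
  | .eq a b => occursUnderNabla y a ∨ occursUnderNabla y b
  | .fls => False
  | .imp a b => occursUnderNabla y a ∨ occursUnderNabla y b
  | .all x e => y ≠ x ∧ occursUnderNabla y e
  | .nabla e => freeRigid y e

/-- The i-th argument position of the operator defined by d(x₁,…,xₙ) ≜ body is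
    Leibniz iff xᵢ does not occur within a non-Leibniz argument position in body. -/
def LeibnizPos {n : ℕ} (xs : Fin n → X) (body : Expr X V O ar) (i : Fin n) : Prop :=
  ¬ occursUnderNabla (xs i) body

lemma freshVar_notMem [Infinite X] (l : List X) : freshVar l ∉ l := by
  simpa [freshVar, List.mem_toFinset] using
    Classical.choose_spec (Infinite.exists_notMem_finset l.toFinset)

lemma freeRigid_iff_mem_freeList (y : X) (e : Expr X V O ar) :
    freeRigid y e ↔ y ∈ freeList e := by
  induction e with
  | app op es ih =>
      simp only [freeRigid, freeList, List.mem_flatten, List.mem_ofFn, ih]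
      constructor
      · rintro ⟨i, hi⟩
        exact ⟨freeList (es i), ⟨i, rfl⟩, hi⟩
      · rintro ⟨l, ⟨i, rfl⟩, hi⟩
        exact ⟨i, hi⟩
  | all z e ih => simp [freeRigid, freeList, ih, List.mem_filter, and_comm]
  | _ => simp_all [freeRigid, freeList]

lemma freeRigid_of_occursUnderNabla {y : X} {e : Expr X V O ar}
    (h : occursUnderNabla y e) : freeRigid y e := by
  induction e with
  | app op es ih => exact h.imp fun i => ih i
  | eq a b iha ihb => exact h.imp iha ihb
  | imp a b iha ihb => exact h.imp iha ihb
  | all z e ih => exact ⟨h.1, ih h.2⟩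
  | nabla e => exact h
  | _ => exact h.elim

lemma not_freeRigid_freshVar [Infinite X] (σ : X → Expr X V O ar) {e : Expr X V O ar} {y : X}
    (hy : freeRigid y e) :
    ¬ freeRigid (freshVar ((freeList e).flatMap fun y => freeList (σ y))) (σ y) := fun h =>
  freshVar_notMem _ <| List.mem_flatMap.2
    ⟨y, (freeRigid_iff_mem_freeList y e).1 hy, (freeRigid_iff_mem_freeList _ _).1 h⟩

lemma eval_congr (M : Model X V O ar) (e : Expr X V O ar) {ξ ξ' : X → M.U}
    (h : ∀ y, freeRigid y e → ξ y = ξ' y) (w : M.W) :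
    eval M e ξ w = eval M e ξ' w := by
  induction e generalizing ξ ξ' w with
  | rig x => exact h x rfl
  | app op es ih =>
      simp only [eval]
      congr 1
      funext j
      exact ih j (fun y hy => h y ⟨j, hy⟩) w
  | eq a b iha ihb =>
      simp only [eval, iha (fun y hy => h y (.inl hy)), ihb (fun y hy => h y (.inr hy))]
  | imp a b iha ihb =>
      simp only [eval, iha (fun y hy => h y (.inl hy)), ihb (fun y hy => h y (.inr hy))]
  | all z e ih =>
      have hd : ∀ d, eval M e (Function.update ξ z d) w = eval M e (Function.update ξ' z d) w :=
        fun d => ih (fun y hy => by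
          by_cases hyz : y = z
          · simp [hyz]
          · simp only [Function.update_of_ne hyz, h y ⟨hyz, hy⟩]) w
      simp only [eval, hd]
  | nabla e ih => simp only [eval, ih h]
  | _ => rfl

lemma eval_update_of_not_freeRigid (M : Model X V O ar) {e : Expr X V O ar} (ξ : X → M.U)
    {x : X} (d : M.U) (hx : ¬ freeRigid x e) (w : M.W) :
    eval M e (Function.update ξ x d) w = eval M e ξ w := by
  refine eval_congr M e (fun y hy => ?_) w
  rw [Function.update_of_ne]
  rintro rfl
  exact hx hy

lemma eval_update_rig_of_ne (M : Model X V O ar) (σ : X → Expr X V O ar) (ξ : X → M.U)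
    {y z x' : X} (d : M.U) (hyz : y ≠ z) (hx' : ¬ freeRigid x' (σ y)) (w : M.W) :
    eval M (Function.update σ z (.rig x') y) (Function.update ξ x' d) w = eval M (σ y) ξ w := by
  rw [Function.update_of_ne hyz, eval_update_of_not_freeRigid M ξ d hx']

lemma eval_subst_congr [Infinite X] (M : Model X V O ar) (e : Expr X V O ar)
    {σ σ' : X → Expr X V O ar} {ξ ξ' : X → M.U} {w : M.W}
    (hfree : ∀ y, freeRigid y e → eval M (σ y) ξ w = eval M (σ' y) ξ' w)
    (hnabla : ∀ y, occursUnderNabla y e → ∀ w', eval M (σ y) ξ w' = eval M (σ' y) ξ' w') :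
    eval M (subst σ e) ξ w = eval M (subst σ' e) ξ' w := by
  induction e generalizing σ σ' ξ ξ' w with
  | rig x => exact hfree x rfl
  | app op es ih =>
      simp only [subst, eval]
      congr 1
      funext j
      exact ih j (fun y hy => hfree y ⟨j, hy⟩) (fun y hy => hnabla y ⟨j, hy⟩)
  | eq a b iha ihb =>
      simp only [subst, eval, iha (fun y hy => hfree y (.inl hy)) (fun y hy => hnabla y (.inl hy)),
        ihb (fun y hy => hfree y (.inr hy)) (fun y hy => hnabla y (.inr hy))]
  | imp a b iha ihb =>
      simp only [subst, eval, iha (fun y hy => hfree y (.inl hy)) (fun y hy => hnabla y (.inl hy)),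
        ihb (fun y hy => hfree y (.inr hy)) (fun y hy => hnabla y (.inr hy))]
  | all z e ih =>
      simp only [subst, eval]
      set x₁ := freshVar ((freeList e).flatMap fun y => freeList (σ y))
      set x₂ := freshVar ((freeList e).flatMap fun y => freeList (σ' y))
      have hd : ∀ d, eval M (subst (Function.update σ z (.rig x₁)) e) (Function.update ξ x₁ d) w
          = eval M (subst (Function.update σ' z (.rig x₂)) e) (Function.update ξ' x₂ d) w := by
        intro d
        refine ih (fun y hy => ?_) (fun y hy w' => ?_)
        · by_cases hyz : y = z
          · simp [hyz, eval]
          · rw [eval_update_rig_of_ne M σ ξ d hyz (not_freeRigid_freshVar σ hy),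
              eval_update_rig_of_ne M σ' ξ' d hyz (not_freeRigid_freshVar σ' hy)]
            exact hfree y ⟨hyz, hy⟩
        · by_cases hyz : y = z
          · simp [hyz, eval]
          · have hy' := freeRigid_of_occursUnderNabla hy
            rw [eval_update_rig_of_ne M σ ξ d hyz (not_freeRigid_freshVar σ hy'),
              eval_update_rig_of_ne M σ' ξ' d hyz (not_freeRigid_freshVar σ' hy')]
            exact hnabla y ⟨hyz, hy⟩ w'
      simp only [hd]
  | nabla e ih =>
      have hd : ∀ w', eval M (subst σ e) ξ w' = eval M (subst σ' e) ξ' w' := fun w' =>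
        ih (fun y hy => hnabla y hy w') (fun y hy => hnabla y (freeRigid_of_occursUnderNabla hy))
      simp only [subst, eval, hd]
  | _ => rfl

lemma substMap_apply_of_injective {n : ℕ} {xs : Fin n → X} (hinj : Function.Injective xs)
    (es : Fin n → Expr X V O ar) (j : Fin n) : substMap xs es (xs j) = es j := by
  have h : ∃ k, xs k = xs j := ⟨j, rfl⟩
  rw [substMap, dif_pos h, hinj h.choose_spec]

/-- Lemma 2, Leibniz principle for Leibniz argument positions: for
    an operator defined by d(x₁,…,xₙ) ≜ body whose i-th argument position is
    Leibniz, expressions e₁,…,eₙ, and a rigid variable x free in no eⱼ,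
    ⟦d(e₁,…,eₙ)⟧^M_w = ⟦d(e₁,…,x,…,eₙ)⟧^{M'}_w
    where M' is M with ξ(x) changed to ⟦eᵢ⟧^M_w. -/
theorem leibniz_position [Infinite X] {n : ℕ}
    (xs : Fin n → X) (hinj : Function.Injective xs)
    (body : Expr X V O ar) (hbody : ∀ y : X, freeRigid y body → ∃ i, xs i = y)
    (i : Fin n) (hL : LeibnizPos xs body i)
    (es : Fin n → Expr X V O ar)
    (M : Model X V O ar) (ξ : X → M.U) (w : M.W)
    (x : X) (hx : ∀ j : Fin n, ¬ freeRigid x (es j)) :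
    eval M (dApp xs body es) ξ w =
      eval M (dApp xs body (Function.update es i (Expr.rig x)))
        (Function.update ξ x (eval M (es i) ξ w)) w := by
  apply eval_subst_congr
  · intro y hy
    obtain ⟨j, rfl⟩ := hbody y hy
    rw [substMap_apply_of_injective hinj, substMap_apply_of_injective hinj]
    by_cases hj : j = i
    · subst hj
      simp [eval]
    · rw [Function.update_of_ne hj, eval_update_of_not_freeRigid M ξ _ (hx j)]
  · intro y hy w'
    obtain ⟨j, rfl⟩ := hbody y (freeRigid_of_occursUnderNabla hy)
    have hj : j ≠ i := fun h => hL (h ▸ hy)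
    rw [substMap_apply_of_injective hinj, substMap_apply_of_injective hinj,
      Function.update_of_ne hj, eval_update_of_not_freeRigid M ξ _ (hx j)]
end

section
/- Key lemma in the proof of Theorem 1: for every Kripke model M and state w, there exists a first-order structure S = (I', ξ') over the extended variable set 𝒳 ∪ 𝒱, with I' agreeing with I on all operator symbols of 𝒪 and ξ'(x) = ξ(x) for x ∈ 𝒳 and ξ'(v) = ζ(v,w) for v ∈ 𝒱, such that ⟦⟦e⟧⟧^S = ⟦e⟧^M_w for every FOML expression e, where ⟦e⟧ is the FOL coalescing of e. -/
open scoped Classical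

variable {X V O : Type} {ar : O → ℕ}

/-! ### de Bruijn representation, used to identify λ-abstractions up to α-equivalence -/

/-- Locally-nameless / de Bruijn version of FOML expressions: bound rigid variables
    are represented by indices, free rigid variables by names.  Two named expressions
    (or λ-abstractions over lists of rigid variables) are α-equivalent iff they have
    the same de Bruijn image. -/
inductive DB (X V O : Type) (ar : O → ℕ) : Type where
  | bvar  : ℕ → DB X V O ar
  | fvar  : X → DB X V O ar
  | flex  : V → DB X V O ar
  | app   : (op : O) → (Fin (ar op) → DB X V O ar) → DB X V O ar
  | eq    : DB X V O ar → DB X V O ar → DB X V O ar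
  | fls   : DB X V O ar
  | imp   : DB X V O ar → DB X V O ar → DB X V O ar
  | all   : DB X V O ar → DB X V O ar
  | nabla : DB X V O ar → DB X V O ar

/-- Conversion to de Bruijn form, relative to a context `ctx` of bound rigid
    variables (innermost binder first). -/
noncomputable def toDB (ctx : List X) : Expr X V O ar → DB X V O ar
  | .rig x =>
      match ctx.findIdx? (fun y => decide (y = x)) with
      | some i => .bvar i
      | none => .fvar x
  | .flex v => .flex v
  | .app op es => .app op (fun i => toDB ctx (es i))
  | .eq a b => .eq (toDB ctx a) (toDB ctx b)
  | .fls => .fls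
  | .imp a b => .imp (toDB ctx a) (toDB ctx b)
  | .all x e => .all (toDB (x :: ctx) e)
  | .nabla e => .nabla (toDB ctx e)

/-! ### First-order logic (FOL fragment) -/

/-- FOL expressions over a set `U'` of variables and operator symbols `O'`. -/
inductive FExpr (U' O' : Type) (ar' : O' → ℕ) : Type where
  | var : U' → FExpr U' O' ar'
  | app : (op : O') → (Fin (ar' op) → FExpr U' O' ar') → FExpr U' O' ar'
  | eq  : FExpr U' O' ar' → FExpr U' O' ar' → FExpr U' O' ar'
  | fls : FExpr U' O' ar'
  | imp : FExpr U' O' ar' → FExpr U' O' ar' → FExpr U' O' ar'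
  | all : U' → FExpr U' O' ar' → FExpr U' O' ar'

/-- A first-order structure (interpretation part; the variable valuation is given
    separately so that it can be varied in the clause for ∀). -/
structure FOLStruct (O' : Type) (ar' : O' → ℕ) where
  U : Type
  tt : U
  ff : U
  tt_ne_ff : tt ≠ ff
  I : (op : O') → (Fin (ar' op) → U) → U

noncomputable def feval {U' O' : Type} {ar' : O' → ℕ} (S : FOLStruct O' ar') :
    FExpr U' O' ar' → (U' → S.U) → S.U
  | .var u, ξ => ξ u
  | .app op es, ξ => S.I op (fun i => feval S (es i) ξ)
  | .eq a b, ξ => if feval S a ξ = feval S b ξ then S.tt else S.ff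
  | .fls, _ => S.ff
  | .imp a b, ξ => if (feval S a ξ = S.tt → feval S b ξ = S.tt) then S.tt else S.ff
  | .all u e, ξ => if (∀ d : S.U, feval S e (Function.update ξ u d) = S.tt) then S.tt else S.ff

/-- First-order consequence: every structure (with its valuation) making all
    premises true makes the conclusion true. -/
def FOLConsequence {U' O' : Type} {ar' : O' → ℕ}
    (Δ : Set (FExpr U' O' ar')) (χ : FExpr U' O' ar') : Prop :=
  ∀ (S : FOLStruct O' ar') (ξ : U' → S.U),
    (∀ ψ ∈ Δ, feval S ψ ξ = S.tt) → feval S χ ξ = S.tt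

/-! ### Coalescing modal subexpressions to FOL -/

/-- Operator symbols of the coalesced FOL language: the original symbols of 𝒪
    together with a fresh symbol ⟨λ z⃗ : ∇e⟩ for each λ-abstraction of a modal
    expression over a list z⃗ of rigid variables; such λ-abstractions are
    represented by (|z⃗|, de Bruijn image), so that two of them are identified
    iff they are α-equivalent. -/
def FOp (X V O : Type) (ar : O → ℕ) : Type := O ⊕ (ℕ × DB X V O ar)

def FOpAr : FOp X V O ar → ℕ
  | .inl op => ar op
  | .inr p => p.1

/-- Coalescing ⟦e^{y⃗}⟧ of an FOML expression, relative to the list y⃗ of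
    rigid variables bound above (innermost first): modal subexpressions ∇e are
    replaced by the fresh operator ⟨λ z⃗ : ∇e⟩ applied to z⃗, where z⃗ is the
    subsequence of variables of y⃗ that occur free in e.  Flexible variables
    are treated as FOL variables in the extended set 𝒳 ⊕ 𝒱. -/
noncomputable def coal (ys : List X) :
    Expr X V O ar → FExpr (X ⊕ V) (FOp X V O ar) FOpAr
  | .rig x => .var (.inl x)
  | .flex v => .var (.inr v)
  | .app op es => .app (.inl op) (fun i => coal ys (es i))
  | .eq a b => .eq (coal ys a) (coal ys b)
  | .fls => .fls
  | .imp a b => .imp (coal ys a) (coal ys b)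
  | .all x e => .all (.inl x) (coal (x :: ys) e)
  | .nabla e =>
      let z : List X := ys.filter (fun y => decide (freeRigid y e))
      .app (.inr (z.length, toDB z (.nabla e))) (fun i => .var (.inl (z.get i)))

/-! The proof interprets each fresh symbol ⟨λz⃗: ∇e⟩ by evaluating its de Bruijn image at
the state w, the arguments supplying the values of the bound indices. Since the de Bruijn
image determines the λ-abstraction up to α-equivalence, this interpretation is well defined,
and a structural induction on e shows that coalescing then commutes with evaluation. -/

noncomputable def dbEval (M : Model X V O ar) (ξ : X → M.U) :
    DB X V O ar → (ℕ → M.U) → M.W → M.U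
  | .bvar i, env, _ => env i
  | .fvar x, _, _ => ξ x
  | .flex v, _, w => M.ζ v w
  | .app op es, env, w => M.I op (fun i => dbEval M ξ (es i) env w)
  | .eq a b, env, w => if dbEval M ξ a env w = dbEval M ξ b env w then M.tt else M.ff
  | .fls, _, _ => M.ff
  | .imp a b, env, w =>
      if (dbEval M ξ a env w = M.tt → dbEval M ξ b env w = M.tt) then M.tt else M.ff
  | .all e, env, w =>
      if (∀ d : M.U, dbEval M ξ e (fun n => Nat.casesOn n d env) w = M.tt) then M.tt else M.ff
  | .nabla e, env, w => M.box {u : M.U | ∃ w', M.R w w' ∧ dbEval M ξ e env w' = u}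

noncomputable def ctxLookup {A : Type} (ξ : X → A) (env : ℕ → A) (ctx : List X) (x : X) : A :=
  match ctx.findIdx? (fun y => decide (y = x)) with
  | some i => env i
  | none => ξ x

theorem ctxLookup_cons {A : Type} (ξ : X → A) (env : ℕ → A) (ctx : List X) (x y : X)
    (d : A) :
    ctxLookup ξ (fun n => Nat.casesOn n d env) (x :: ctx) y =
      if y = x then d else ctxLookup ξ env ctx y := by
  unfold ctxLookup
  rw [List.findIdx?_cons]
  by_cases hyx : y = x
  · simp [hyx]
  · have hxy : ¬x = y := Ne.symm hyx
    cases ctx.findIdx? (fun z => decide (z = y)) <;> simp [hyx, hxy]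

theorem ctxLookup_eq_ite_mem {A : Type} (ξ ρ : X → A) (env : ℕ → A) (z : List X)
    (henv : ∀ i (hi : i < z.length), env i = ρ z[i]) (x : X) :
    ctxLookup ξ env z x = if x ∈ z then ρ x else ξ x := by
  unfold ctxLookup
  cases hf : z.findIdx? (fun y => decide (y = x)) with
  | some i =>
    obtain ⟨hi, hzi, -⟩ := List.findIdx?_eq_some_iff_getElem.1 hf
    have hzi : z[i] = x := by simpa using hzi
    simp only [henv i hi, hzi, hzi ▸ List.getElem_mem hi, if_true]
  | none =>
    have hx : x ∉ z := fun hx => by simpa using List.findIdx?_eq_none_iff.1 hf x hx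
    simp only [hx, if_false]

theorem dbEval_toDB (M : Model X V O ar) (ξ : X → M.U) (e : Expr X V O ar) (ctx : List X)
    (env : ℕ → M.U) (ρ : X → M.U) (w : M.W)
    (h : ∀ x, freeRigid x e → ctxLookup ξ env ctx x = ρ x) :
    dbEval M ξ (toDB ctx e) env w = eval M e ρ w := by
  induction e generalizing ctx env ρ w with
  | rig x =>
    rw [eval, ← h x rfl, toDB, ctxLookup]
    cases ctx.findIdx? (fun y => decide (y = x)) <;> rfl
  | flex v => rfl
  | app op es ih =>
    simp only [toDB, dbEval, eval]
    congr 1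
    funext i
    exact ih i ctx env ρ w fun x hx => h x ⟨i, hx⟩
  | eq a b iha ihb =>
    simp only [toDB, dbEval, eval, iha ctx env ρ w fun x hx => h x (.inl hx),
      ihb ctx env ρ w fun x hx => h x (.inr hx)]
  | fls => rfl
  | imp a b iha ihb =>
    simp only [toDB, dbEval, eval, iha ctx env ρ w fun x hx => h x (.inl hx),
      ihb ctx env ρ w fun x hx => h x (.inr hx)]
  | all x e ih =>
    have body : ∀ d, dbEval M ξ (toDB (x :: ctx) e) (fun n => Nat.casesOn n d env) w
        = eval M e (Function.update ρ x d) w := fun d =>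
      ih (x :: ctx) _ _ w fun y hy => by
        rw [ctxLookup_cons, Function.update_apply]
        split_ifs with hyx
        · rfl
        · exact h y ⟨hyx, hy⟩
    simp only [toDB, dbEval, eval, body]
  | nabla e ih =>
    simp only [toDB, dbEval, eval, fun w' => ih ctx env ρ w' h]

/-- Indices beyond the arity never occur in the de Bruijn image; they get the junk value `tt`. -/
noncomputable def coalInterp (M : Model X V O ar) (ξ : X → M.U) (w : M.W) :
    (op : FOp X V O ar) → (Fin (FOpAr op) → M.U) → M.U
  | .inl op => M.I op
  | .inr (n, t) => fun args => dbEval M ξ t (fun i => if h : i < n then args ⟨i, h⟩ else M.tt) w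

theorem feval_coal (M : Model X V O ar) (ξ : X → M.U) (w : M.W) (e : Expr X V O ar)
    (ys : List X) (ξ' : X ⊕ V → M.U) (hζ : ∀ v, ξ' (.inr v) = M.ζ v w)
    (hξ : ∀ x ∉ ys, ξ' (.inl x) = ξ x) :
    feval ⟨M.U, M.tt, M.ff, M.tt_ne_ff, coalInterp M ξ w⟩ (coal ys e) ξ'
      = eval M e (ξ' ∘ Sum.inl) w := by
  induction e generalizing ys ξ' with
  | rig x => rfl
  | flex v => exact hζ v
  | app op es ih =>
    simp only [coal, feval, eval]
    exact congrArg (M.I op) (funext fun i => ih i ys ξ' hζ hξ)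
  | eq a b iha ihb => simp only [coal, feval, eval, iha ys ξ' hζ hξ, ihb ys ξ' hζ hξ]
  | fls => rfl
  | imp a b iha ihb => simp only [coal, feval, eval, iha ys ξ' hζ hξ, ihb ys ξ' hζ hξ]
  | all x e ih =>
    simp only [coal, feval, eval]
    congr 1
    refine propext (forall_congr' fun d => ?_)
    rw [ih (x :: ys)]
    · simp only [Function.update_comp_eq_of_injective _ Sum.inl_injective]
    · intro v
      simp only [Function.update_of_ne Sum.inr_ne_inl, hζ]
    · intro y hy
      simp only [Function.update_of_ne (Sum.inl_injective.ne (List.ne_of_not_mem_cons hy)),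
        hξ y (List.not_mem_of_not_mem_cons hy)]
  | nabla e =>
    set z := ys.filter (fun y => decide (freeRigid y e))
    show dbEval M ξ (toDB z (.nabla e))
      (fun i => if h : i < z.length then ξ' (.inl z[i]) else M.tt) w = _
    refine dbEval_toDB M ξ (.nabla e) z _ _ w fun x hx => ?_
    refine (ctxLookup_eq_ite_mem ξ (ξ' ∘ Sum.inl) _ z (fun i hi => dif_pos hi) x).trans ?_
    split_ifs with hxz
    · rfl
    · exact (hξ x fun hxy => hxz (List.mem_filter.2 ⟨hxy, decide_eq_true hx⟩)).symm

/-- key lemma in the proof of Theorem 1: for every Kripke model M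
    (with rigid valuation ξ) and state w there is a first-order structure over
    the universe of M — interpreting the original operator symbols as in M, the
    FOL variables 𝒳 ⊕ 𝒱 by ξ and by ζ(·, w) — in which every coalesced
    expression ⟦e⟧ evaluates to ⟦e⟧^M_w. -/
theorem coalescing_key_lemma (X V O : Type) (ar : O → ℕ)
    (M : Model X V O ar) (ξ : X → M.U) (w : M.W) :
    ∃ (I' : (op : FOp X V O ar) → (Fin (FOpAr op) → M.U) → M.U)
      (ξ' : X ⊕ V → M.U),
      (∀ op : O, I' (Sum.inl op) = M.I op) ∧
      (∀ x : X, ξ' (Sum.inl x) = ξ x) ∧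
      (∀ v : V, ξ' (Sum.inr v) = M.ζ v w) ∧
      (∀ e : Expr X V O ar,
        feval (FOLStruct.mk M.U M.tt M.ff M.tt_ne_ff I') (coal [] e) ξ'
          = eval M e ξ w) :=
  ⟨coalInterp M ξ w, Sum.elim ξ (M.ζ · w), fun _ => rfl, fun _ => rfl, fun _ => rfl,
    fun e => feval_coal M ξ w e [] _ (fun _ => rfl) (fun _ _ => rfl)⟩
end

section
/- Key lemma in the proof of the ML soundness theorem: for every Kripke model M = (I, ξ, W, R, ζ, ∇_M), there exists a propositional Kripke model K = (W, R, ζ') over the same states and accessibility relation such that (i) for every FOML expression e and state w, K,w ⊨ ⟦e⟧ iff ⟦e⟧^M_w = tt (where ⟦e⟧ is the ML coalescing of e), and (ii) for every rigid expression e and state w, K,w ⊨ ⟨e⟩ ⟹ ∇⟨e⟩. -/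
open scoped Classical

variable {X V O : Type} {ar : O → ℕ}

/-! ### Propositional modal logic (ML) -/

/-- ML formulas over propositional (flexible) variables `P`. -/
inductive MLF (P : Type) : Type where
  | var   : P → MLF P
  | fls   : MLF P
  | imp   : MLF P → MLF P → MLF P
  | nabla : MLF P → MLF P

/-- A propositional Kripke model (the valuation is Prop-valued: `True` plays the
    role of tt and `False` of ff). -/
structure MLModel (P : Type) where
  W : Type
  W_nonempty : Nonempty W
  R : W → W → Prop
  val : P → W → Prop

def mlsat {P : Type} (K : MLModel P) : MLF P → K.W → Prop
  | .var p, w => K.val p w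
  | .fls, _ => False
  | .imp a b, w => mlsat K a w → mlsat K b w
  | .nabla a, w => ∀ w' : K.W, K.R w w' → mlsat K a w'

def MLConsequence {P : Type} (Δ : Set (MLF P)) (χ : MLF P) : Prop :=
  ∀ K : MLModel P, (∀ ψ ∈ Δ, ∀ w : K.W, mlsat K ψ w) → ∀ w : K.W, mlsat K χ w

/-! ### Coalescing first-order subexpressions to ML -/

/-- Propositional variables of the coalesced ML language: the original flexible
    variables 𝒱 together with a fresh variable ⟨e⟩ for each first-order
    expression e; expressions are represented by their (closed-context) de Bruijn
    image, so that ⟨e⟩ and ⟨e'⟩ are identified iff e and e' are α-equivalent. -/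
def MLVar (X V O : Type) (ar : O → ℕ) : Type := V ⊕ DB X V O ar

/-- The fresh propositional variable ⟨e⟩. -/
noncomputable def atomOf (e : Expr X V O ar) : MLVar X V O ar := Sum.inr (toDB [] e)

/-- Coalescing an FOML expression to an ML formula. -/
noncomputable def mlcoal : Expr X V O ar → MLF (MLVar X V O ar)
  | .rig x => .var (atomOf (.rig x))
  | .flex v => .var (.inl v)
  | .app op es => .var (atomOf (.app op es))
  | .eq a b => .var (atomOf (.eq a b))
  | .fls => .fls
  | .imp a b => .imp (mlcoal a) (mlcoal b)
  | .all x e => .var (atomOf (.all x e))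
  | .nabla e => .nabla (mlcoal e)

/-- Occurrence of a propositional variable in an ML formula. -/
def occursVar {P : Type} (p : P) : MLF P → Prop
  | .var q => p = q
  | .fls => False
  | .imp a b => occursVar p a ∨ occursVar p b
  | .nabla a => occursVar p a

/-- 𝓗(Δ): the rigidity hypotheses ⟨e⟩ ⟹ ∇⟨e⟩, for all fresh variables ⟨e⟩
    introduced in ⟦Δ⟧ that correspond to rigid expressions e. -/
def Hset (Δ : Set (Expr X V O ar)) : Set (MLF (MLVar X V O ar)) :=
  { f | ∃ e : Expr X V O ar, Rigid e ∧
        (∃ ψ ∈ Δ, occursVar (atomOf e) (mlcoal ψ)) ∧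
        f = .imp (.var (atomOf e)) (.nabla (.var (atomOf e))) }


/-! The valuation of the coalesced model makes ⟨e⟩ true at w iff ⟦e⟧^M_w = tt. It is well defined
on α-equivalence classes because a de Bruijn term can be evaluated directly; rigid expressions
have state-independent values, so ⟨e⟩ ⟹ ∇⟨e⟩ holds for them. -/

noncomputable def evalDB (M : Model X V O ar) (ξ : X → M.U) :
    DB X V O ar → Stream' M.U → M.W → M.U
  | .bvar n, ρ, _ => ρ n
  | .fvar x, _, _ => ξ x
  | .flex v, _, w => M.ζ v w
  | .app op es, ρ, w => M.I op (fun i => evalDB M ξ (es i) ρ w)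
  | .eq a b, ρ, w => if evalDB M ξ a ρ w = evalDB M ξ b ρ w then M.tt else M.ff
  | .fls, _, _ => M.ff
  | .imp a b, ρ, w =>
      if (evalDB M ξ a ρ w = M.tt → evalDB M ξ b ρ w = M.tt) then M.tt else M.ff
  | .all e, ρ, w =>
      if (∀ d : M.U, evalDB M ξ e (Stream'.cons d ρ) w = M.tt) then M.tt else M.ff
  | .nabla e, ρ, w => M.box {u : M.U | ∃ w', M.R w w' ∧ evalDB M ξ e ρ w' = u}

/-- The named valuation seen by a de Bruijn term under the binders `ctx`, whose values are `ρ`. -/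
noncomputable def dbEnv {U : Type*} (ξ : X → U) (ρ : Stream' U) (ctx : List X) (x : X) : U :=
  match ctx.findIdx? (fun y => decide (y = x)) with
  | some i => ρ i
  | none => ξ x

@[simp]
lemma dbEnv_nil {U : Type*} (ξ : X → U) (ρ : Stream' U) : dbEnv ξ ρ [] = ξ := rfl

lemma dbEnv_cons {U : Type*} (ξ : X → U) (ρ : Stream' U) (ctx : List X) (x : X) (d : U) :
    dbEnv ξ (Stream'.cons d ρ) (x :: ctx) = Function.update (dbEnv ξ ρ ctx) x d := by
  funext y
  by_cases hxy : y = x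
  · subst hxy
    simp [dbEnv, List.findIdx?_cons, Stream'.cons]
  · simp only [dbEnv, List.findIdx?_cons, Function.update_of_ne hxy, Ne.symm hxy, decide_false]
    cases ctx.findIdx? (fun z => decide (z = y)) <;> rfl

lemma evalDB_toDB (M : Model X V O ar) (ξ : X → M.U) (e : Expr X V O ar) (ctx : List X)
    (ρ : Stream' M.U) (w : M.W) :
    evalDB M ξ (toDB ctx e) ρ w = eval M e (dbEnv ξ ρ ctx) w := by
  induction e generalizing ctx ρ w with
  | rig x =>
    simp only [toDB, eval, dbEnv]
    cases ctx.findIdx? (fun y => decide (y = x)) <;> rfl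
  | flex v => rfl
  | app op es ih => simp only [toDB, eval, evalDB, ih]
  | eq a b iha ihb => simp only [toDB, eval, evalDB, iha, ihb]
  | fls => rfl
  | imp a b iha ihb => simp only [toDB, eval, evalDB, iha, ihb]
  | all x e ih => simp only [toDB, eval, evalDB, ih, dbEnv_cons]
  | nabla e ih => simp only [toDB, eval, evalDB, ih]

lemma Model.ite_eq_tt (M : Model X V O ar) (c : Prop) [Decidable c] :
    (if c then M.tt else M.ff) = M.tt ↔ c := by
  by_cases h : c <;> simp [h, M.tt_ne_ff.symm]

lemma eval_eq_of_rigid (M : Model X V O ar) {e : Expr X V O ar} (he : Rigid e) (ξ : X → M.U)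
    (w w' : M.W) : eval M e ξ w = eval M e ξ w' := by
  induction e generalizing ξ with
  | rig x => rfl
  | flex v => exact he.elim
  | app op es ih => simp only [eval, ih _ (he _)]
  | eq a b iha ihb => simp only [eval, iha he.1, ihb he.2]
  | fls => rfl
  | imp a b iha ihb => simp only [eval, iha he.1, ihb he.2]
  | all x e ih => simp only [eval, ih he]
  | nabla e => exact he.elim

/-- The bound-variable stream is irrelevant here: `atomOf` only produces closed de Bruijn terms. -/
noncomputable def coalVal (M : Model X V O ar) (ξ : X → M.U) : MLVar X V O ar → M.W → Prop
  | .inl v, w => M.ζ v w = M.tt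
  | .inr d, w => evalDB M ξ d (Stream'.const M.tt) w = M.tt

def coalModel (M : Model X V O ar) (ξ : X → M.U) : MLModel (MLVar X V O ar) :=
  ⟨M.W, M.W_nonempty, M.R, coalVal M ξ⟩

lemma coalVal_atomOf (M : Model X V O ar) (ξ : X → M.U) (e : Expr X V O ar) (w : M.W) :
    coalVal M ξ (atomOf e) w ↔ eval M e ξ w = M.tt := by
  simp only [coalVal, atomOf, evalDB_toDB, dbEnv_nil]

lemma mlsat_coalModel_mlcoal (M : Model X V O ar) (ξ : X → M.U) (e : Expr X V O ar) (w : M.W) :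
    mlsat (coalModel M ξ) (mlcoal e) w ↔ eval M e ξ w = M.tt := by
  induction e generalizing w with
  | rig x => exact coalVal_atomOf M ξ _ w
  | flex v => rfl
  | app op es => exact coalVal_atomOf M ξ _ w
  | eq a b => exact coalVal_atomOf M ξ _ w
  | fls => simp [mlcoal, mlsat, eval, M.tt_ne_ff.symm]
  | imp a b iha ihb => simp only [mlcoal, mlsat, iha, ihb, eval, M.ite_eq_tt]
  | all x e => exact coalVal_atomOf M ξ _ w
  | nabla e ih =>
    simp only [mlcoal, mlsat, eval, M.box_eq_tt]
    constructor
    · rintro h _ ⟨w', hw', rfl⟩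
      exact (ih w').mp (h w' hw')
    · exact fun h w' hw' => (ih w').mpr (h ⟨w', hw', rfl⟩)

lemma mlsat_coalModel_rigid (M : Model X V O ar) (ξ : X → M.U) {e : Expr X V O ar}
    (he : Rigid e) (w : M.W) :
    mlsat (coalModel M ξ) (.imp (.var (atomOf e)) (.nabla (.var (atomOf e)))) w := by
  intro hw w' _
  have hw : eval M e ξ w = M.tt := (coalVal_atomOf M ξ e w).mp hw
  exact (coalVal_atomOf M ξ e w').mpr (eval_eq_of_rigid M he ξ w' w ▸ hw)

/-- key lemma in the proof of the ML soundness theorem: for every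
    Kripke model M (with rigid valuation ξ) there is a propositional Kripke model
    over the same states and accessibility relation such that (i) for every FOML
    expression e and state w, the coalesced formula ⟦e⟧ holds at w iff
    ⟦e⟧^M_w = tt, and (ii) ⟨e⟩ ⟹ ∇⟨e⟩ holds everywhere for every rigid e. -/
theorem coalescing_ML_key_lemma (X V O : Type) (ar : O → ℕ)
    (M : Model X V O ar) (ξ : X → M.U) :
    ∃ val : MLVar X V O ar → M.W → Prop,
      (∀ (e : Expr X V O ar) (w : M.W),
        mlsat (MLModel.mk M.W M.W_nonempty M.R val) (mlcoal e) w ↔ eval M e ξ w = M.tt) ∧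
      (∀ e : Expr X V O ar, Rigid e → ∀ w : M.W,
        mlsat (MLModel.mk M.W M.W_nonempty M.R val)
          (MLF.imp (.var (atomOf e)) (.nabla (.var (atomOf e)))) w) :=
  ⟨coalVal M ξ, mlsat_coalModel_mlcoal M ξ, fun _ he => mlsat_coalModel_rigid M ξ he⟩
end
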